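/- The common meadow of rationals is minimal: for every element a ∈ Option ℚ there is a closed meadow term t (a meadow term in 0 variables) whose evaluation in the common meadow enlargement of ℚ equals a. -/

import Mathlib

universe u

/-- Meadow terms in `n` variables: variables, constants `0`, `1`, `⊥`,
negation, addition, multiplication and division. -/
inductive MTerm (n : ℕ) : Type where
  | var : Fin n → MTerm n
  | zero : MTerm n
  | one : MTerm n
  | bot : MTerm n
  | neg : MTerm n → MTerm n
  | add : MTerm n → MTerm n → MTerm n
  | mul : MTerm n → MTerm n → MTerm n
  | div : MTerm n → MTerm n → MTerm n

namespace MTerm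

/-- Addition on the common meadow enlargement `Option F` of a field `F`. -/
def cmAdd {F : Type u} [Field F] : Option F → Option F → Option F
  | some a, some b => some (a + b)
  | _, _ => none

/-- Multiplication on the common meadow enlargement `Option F` of a field `F`. -/
def cmMul {F : Type u} [Field F] : Option F → Option F → Option F
  | some a, some b => some (a * b)
  | _, _ => none

/-- Negation on the common meadow enlargement `Option F` of a field `F`. -/
def cmNeg {F : Type u} [Field F] : Option F → Option F
  | some a => some (-a)
  | none => none

open Classical in
/-- Division on the common meadow enlargement `Option F` of a field `F`:
`x / y = ⊥` if `x = ⊥` or `y = ⊥` or `y = 0`, and `x / y = x * y⁻¹` otherwise. -/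
noncomputable def cmDiv {F : Type u} [Field F] : Option F → Option F → Option F
  | some a, some b => if b = 0 then none else some (a * b⁻¹)
  | _, _ => none

/-- Evaluation of a meadow term in the common meadow enlargement `Option F`
of a field `F`, under a valuation `σ : Fin n → Option F`. -/
noncomputable def eval {n : ℕ} {F : Type u} [Field F] (σ : Fin n → Option F) :
    MTerm n → Option F
  | var i => σ i
  | zero => some 0
  | one => some 1
  | bot => none
  | neg t => cmNeg (t.eval σ)
  | add t s => cmAdd (t.eval σ) (s.eval σ)
  | mul t s => cmMul (t.eval σ) (s.eval σ)
  | div t s => cmDiv (t.eval σ) (s.eval σ)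


end MTerm

namespace MTerm

variable {n : ℕ} {F : Type u} [Field F]

def ofNat : ℕ → MTerm n
  | 0 => zero
  | k + 1 => add (ofNat k) one

def ofInt : ℤ → MTerm n
  | .ofNat k => ofNat k
  | .negSucc k => neg (ofNat (k + 1))

def ofRat (q : ℚ) : MTerm n :=
  div (ofInt q.num) (ofNat q.den)

@[simp]
theorem eval_ofNat (σ : Fin n → Option F) (k : ℕ) : (ofNat k).eval σ = some (k : F) := by
  induction k with
  | zero => simp [ofNat, eval]
  | succ k ih => simp [ofNat, eval, ih, cmAdd]

@[simp]
theorem eval_ofInt (σ : Fin n → Option F) (z : ℤ) : (ofInt z).eval σ = some (z : F) := by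
  cases z with
  | ofNat k => simp [ofInt]
  | negSucc k => simp [ofInt, eval, cmNeg, Int.cast_negSucc]

theorem eval_ofRat [CharZero F] (σ : Fin n → Option F) (q : ℚ) :
    (ofRat q).eval σ = some (q : F) := by
  simp [ofRat, eval, cmDiv, Rat.cast_def, div_eq_mul_inv]

end MTerm

open MTerm in
/-- The common meadow of rationals is minimal: every element of `Option ℚ` is the
value of a closed meadow term (a meadow term in `0` variables). -/
theorem commonMeadow_rat_minimal (a : Option ℚ) :
    ∃ t : MTerm 0, t.eval (Fin.elim0 : Fin 0 → Option ℚ) = a := by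
  cases a with
  | none => exact ⟨bot, rfl⟩
  | some q => exact ⟨ofRat q, by rw [eval_ofRat, Rat.cast_id]⟩
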